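/- Let i, j ∈ I with a(i,j) = −1 and m ∈ ℤ. Then in K_t(A): (t^{1/2} y(i,m+1) z(i; j,m) − t^{−1/2} z(i; j,m) y(i,m+1)) / (t − t^{−1}) = y(j,m). Equivalently, the composite automorphism T_i ∘ T_j sends y(i,m) to y(j,m). -/
import Mathlib


noncomputable section

/-- The base field `F = ℂ(s)`, rational functions over `ℂ` in one variable `s`. -/
abbrev F : Type := RatFunc ℂ

/-- `t^{1/2} := s`. -/
def tHalf : F := RatFunc.X

/-- `t := s^2`. -/
def tq : F := RatFunc.X ^ 2

/-- `A = (a i j)` is the Cartan matrix of a finite-dimensional simply-laced simple Lie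
algebra of type ADE: a symmetric positive-definite integer matrix with diagonal entries `2`
and off-diagonal entries in `{0, -1}`. -/
def IsCartanADE {I : Type} [Fintype I] (a : I → I → ℤ) : Prop :=
  (∀ i, a i i = 2) ∧ (∀ i j, a i j = a j i) ∧
    (∀ i j, i ≠ j → a i j = 0 ∨ a i j = -1) ∧
    Matrix.PosDef (Matrix.of fun i j : I => (a i j : ℝ))

variable {I : Type} [Fintype I] [DecidableEq I]

/-- The generator `y(i,m)` of the free algebra. -/
def X (i : I) (m : ℤ) : FreeAlgebra F (I × ℤ) := FreeAlgebra.ι F (i, m)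

/-- The defining relations (a), (b), (c) of the quantum Grothendieck ring `K_t(A)`:
(a) quantum Serre relations in each copy, (b) `t`-boson relations between adjacent
copies, (c) `t`-commutation relations between non-adjacent copies. -/
inductive KtRel (a : I → I → ℤ) :
    FreeAlgebra F (I × ℤ) → FreeAlgebra F (I × ℤ) → Prop
  | comm0 {i j : I} {m : ℤ} (h : a i j = 0) :
      KtRel a (X i m * X j m) (X j m * X i m)
  | serre {i j : I} {m : ℤ} (h : a i j = -1) :
      KtRel a (X i m ^ 2 * X j m + X j m * X i m ^ 2)
        ((tq + tq⁻¹) • (X i m * X j m * X i m))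
  | boson (i j : I) (m : ℤ) :
      KtRel a (X i m * X j (m + 1))
        ((tq ^ (a i j)) • (X j (m + 1) * X i m)
          + (if i = j then ((1 : F) - tq ^ 2) • (1 : FreeAlgebra F (I × ℤ)) else 0))
  | tcomm {i j : I} {m p : ℤ} (h : p > m + 1) :
      KtRel a (X i m * X j p)
        ((tq ^ ((((-1 : ℤˣ) ^ (p - m + 1) : ℤˣ) : ℤ) * a i j)) • (X j p * X i m))

/-- The quantum Grothendieck ring `K_t(A)`. -/
abbrev Kt (a : I → I → ℤ) := RingQuot (KtRel a)

/-- The generators `y(i,m)` of `K_t(A)`. -/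
def y (a : I → I → ℤ) (i : I) (m : ℤ) : Kt a :=
  RingQuot.mkAlgHom F (KtRel a) (X i m)

/-- `z(i; j, m) := (t^{1/2} y(j,m) y(i,m) − t^{−1/2} y(i,m) y(j,m)) / (t − t^{−1})`. -/
def z (a : I → I → ℤ) (i j : I) (m : ℤ) : Kt a :=
  (tq - tq⁻¹)⁻¹ • (tHalf • (y a j m * y a i m) - tHalf⁻¹ • (y a i m * y a j m))

/-- `T` satisfies the defining formulas of the braid-group generator `T_i` on `K_t(A)`:
`T(y(j,m)) = y(j, m + δ_{ij})` if `a i j ≠ -1`, and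
`T(y(j,m)) = (t^{1/2} y(j,m) y(i,m) − t^{−1/2} y(i,m) y(j,m)) / (t − t^{−1})`
if `a i j = -1`. -/
def TiFormula (a : I → I → ℤ) (i : I) (T : Kt a → Kt a) : Prop :=
  ∀ (j : I) (m : ℤ),
    T (y a j m) =
      if a i j = -1 then z a i j m else y a j (m + if i = j then 1 else 0)

/-- `T` satisfies the defining formulas of the inverse braid-group generator `T_i'`:
`T(y(j,m)) = y(j, m − δ_{ij})` if `a i j ≠ -1`, and
`T(y(j,m)) = (t^{1/2} y(i,m) y(j,m) − t^{−1/2} y(j,m) y(i,m)) / (t − t^{−1})`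
if `a i j = -1`. -/
def TiInvFormula (a : I → I → ℤ) (i : I) (T : Kt a → Kt a) : Prop :=
  ∀ (j : I) (m : ℤ),
    T (y a j m) =
      if a i j = -1 then
        (tq - tq⁻¹)⁻¹ • (tHalf • (y a i m * y a j m) - tHalf⁻¹ • (y a j m * y a i m))
      else y a j (m - if i = j then 1 else 0)


lemma tHalf_ne : tHalf ≠ 0 := RatFunc.X_ne_zero
lemma tq_ne : tq ≠ 0 := pow_ne_zero 2 RatFunc.X_ne_zero
lemma tHalf4_ne_one : tHalf ^ 4 ≠ 1 := by
  intro h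
  have h2 : (Polynomial.X : Polynomial ℂ) ^ 4 = 1 := by
    apply IsFractionRing.injective (Polynomial ℂ) (RatFunc ℂ)
    rw [map_pow, map_one]
    simpa [tHalf, RatFunc.algebraMap_X] using h
  have := congrArg (fun p => Polynomial.coeff p 0) h2
  simp [Polynomial.coeff_X_pow] at this
lemma tqsub_ne : tq - tq⁻¹ ≠ 0 := by
  rw [sub_ne_zero]
  intro h
  apply tHalf4_ne_one
  have h1 : tq * tq = 1 := by nth_rewrite 2 [h]; exact mul_inv_cancel₀ tq_ne
  calc tHalf ^ 4 = tq * tq := by rw [tq, tHalf]; ring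
  _ = 1 := h1
lemma tq_eq : tq = tHalf ^ 2 := rfl

lemma key {K : Type} [Field K] {R : Type} [Ring R] [Algebra K R] (th t : K)
    (ht : t = th ^ 2) (h0 : th ≠ 0) (hd : t - t⁻¹ ≠ 0) (A B C : R)
    (h1 : A * C = (t * t) • (C * A) + (1 - t ^ 2) • (1 : R))
    (h2 : B * C = t⁻¹ • (C * B)) :
    (t - t⁻¹)⁻¹ • (th • (C * ((t - t⁻¹)⁻¹ • (th • (B * A) - th⁻¹ • (A * B))))
      - th⁻¹ • (((t - t⁻¹)⁻¹ • (th • (B * A) - th⁻¹ • (A * B))) * C)) = B := by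
  have htne : t ≠ 0 := by rw [ht]; exact pow_ne_zero 2 h0
  have e1 : B * (A * C) = t • (C * (B * A)) + (1 - t ^ 2) • B := by
    rw [h1, mul_add, mul_smul_comm, mul_smul_comm, mul_one, ← mul_assoc, h2,
      smul_mul_assoc, mul_assoc, smul_smul]
    congr 2
    field_simp [tq_ne]
  have e2 : A * (B * C) = t • (C * (A * B)) + (t⁻¹ - t) • B := by
    rw [h2, mul_smul_comm, ← mul_assoc, h1, add_mul, smul_mul_assoc, smul_mul_assoc, one_mul,
      mul_assoc]
    rw [smul_add, smul_smul, smul_smul]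
    congr 1
    · congr 1; field_simp [tq_ne]
    · congr 1; field_simp [tq_ne]
  have hstep : th • (C * (th • (B * A) - th⁻¹ • (A * B)))
      - th⁻¹ • ((th • (B * A) - th⁻¹ • (A * B)) * C)
      = ((t - t⁻¹) * (t - t⁻¹)) • B := by
    simp only [smul_sub, mul_sub, sub_mul, smul_mul_assoc, mul_smul_comm, mul_assoc, smul_smul,
      e1, e2]
    simp only [smul_add, smul_smul, smul_sub]
    rw [ht]
    match_scalars <;> field_simp <;> ring
  rw [mul_smul_comm, smul_mul_assoc, smul_comm th, smul_comm th⁻¹, ← smul_sub, hstep,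
    smul_smul, smul_smul]
  rw [show (t - t⁻¹)⁻¹ * (t - t⁻¹)⁻¹ * ((t - t⁻¹) * (t - t⁻¹)) = ((t - t⁻¹)⁻¹ * (t - t⁻¹)) ^ 2
    from by ring, inv_mul_cancel₀ hd, one_pow, one_smul]

/-- for `a i j = -1`,
`(t^{1/2} y(i,m+1) z(i;j,m) − t^{−1/2} z(i;j,m) y(i,m+1)) / (t − t^{−1}) = y(j,m)`;
equivalently, `T_i ∘ T_j` sends `y(i,m)` to `y(j,m)`. -/
theorem statement15 {I : Type} [Fintype I] [DecidableEq I] (a : I → I → ℤ)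
    (hA : IsCartanADE a) (i j : I) (hij : a i j = -1) (m : ℤ) :
    ((tq - tq⁻¹)⁻¹ • (tHalf • (y a i (m + 1) * z a i j m)
        - tHalf⁻¹ • (z a i j m * y a i (m + 1))) = y a j m) ∧
    (∀ Ti Tj : Kt a →ₐ[F] Kt a, TiFormula a i ⇑Ti → TiFormula a j ⇑Tj →
        Ti (Tj (y a i m)) = y a j m) := by
  have hne : i ≠ j := by
    intro h
    rw [h, hA.1 j] at hij
    omega
  have haji : a j i = -1 := by rw [← hA.2.1 i j]; exact hij
  have h1 : y a i m * y a i (m + 1)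
      = (tq * tq) • (y a i (m + 1) * y a i m) + ((1 : F) - tq ^ 2) • 1 := by
    have hre := RingQuot.mkAlgHom_rel F (KtRel.boson (a := a) i i m)
    rw [hA.1 i] at hre
    simp only [eq_self_iff_true, if_true, map_add, map_smul, map_mul, map_one] at hre
    simp only [y]
    rw [hre]
    congr 1
    congr 1
    rw [show ((2 : ℤ) : ℤ) = ((2 : ℕ) : ℤ) from rfl, zpow_natCast]
    ring
  have h2 : y a j m * y a i (m + 1) = tq⁻¹ • (y a i (m + 1) * y a j m) := by
    have hre := RingQuot.mkAlgHom_rel F (KtRel.boson (a := a) j i m)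
    rw [haji] at hre
    simp only [if_neg hne.symm, map_add, map_smul, map_mul, map_zero, add_zero, zpow_neg,
      zpow_one] at hre
    simp only [y]
    rw [hre]
  have part1 : (tq - tq⁻¹)⁻¹ • (tHalf • (y a i (m + 1) * z a i j m)
      - tHalf⁻¹ • (z a i j m * y a i (m + 1))) = y a j m := by
    rw [z]
    exact key tHalf tq tq_eq tHalf_ne tqsub_ne (y a i m) (y a j m) (y a i (m + 1)) h1 h2
  refine ⟨part1, ?_⟩
  intro Ti Tj hTi hTj
  have hTji := hTj i m
  rw [if_pos haji] at hTji
  have hTii := hTi i m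
  rw [if_neg (by rw [hA.1 i]; decide), if_pos rfl] at hTii
  have hTij := hTi j m
  rw [if_pos hij] at hTij
  rw [hTji, z, map_smul, map_sub, map_smul, map_smul, map_mul, map_mul, hTii, hTij]
  exact part1
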